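/- Let M be a finite matroid with rank function r. A set I ⊆ E(M) is independent in M if and only if |I ∩ X| ≤ r(X) for every cyclic flat X of M. -/

import Mathlib

/-! A dependent set `I` contains a circuit `C`, and the closure of `C` is a cyclic flat whose
rank is `|C| - 1`, whereas it meets `I` in at least `|C|` elements. Conversely an independent
set meets every set `X` in an independent subset of `X`. -/

namespace Matroid

variable {α β : Type*}

/-- A circuit of a matroid: a minimal dependent set. -/
def IsCircuit' (M : Matroid α) (C : Set α) : Prop :=
  M.Dep C ∧ ∀ D, D ⊂ C → M.Indep D

/-- A cyclic flat: a flat that is a (possibly empty) union of circuits. -/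
def CyclicFlat (M : Matroid α) (X : Set α) : Prop :=
  M.IsFlat X ∧ ∀ e ∈ X, ∃ C, M.IsCircuit' C ∧ C ⊆ X ∧ e ∈ C

/-- The rank of a set: the maximum size of an independent subset. -/
noncomputable def rk (M : Matroid α) (X : Set α) : ℕ :=
  sSup {n | ∃ I, M.Indep I ∧ I ⊆ X ∧ I.ncard = n}

/-- Deletion of a set from a matroid. -/
def del (M : Matroid α) (D : Set α) : Matroid α := M ↾ (M.E \ D)

/-- Contraction of a set in a matroid. -/
def con (M : Matroid α) (C : Set α) : Matroid α := (M✶ ↾ (M.E \ C))✶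

/-- `N` is a minor of `M` if it is obtained from `M` by a contraction and a deletion. -/
def IsMinorOf (N M : Matroid α) : Prop := ∃ C D, N = (M.con C).del D

/-- Matroid isomorphism: a bijection of ground sets preserving independence. -/
def IsIsoTo (M : Matroid α) (N : Matroid β) : Prop :=
  ∃ e : M.E ≃ N.E, ∀ I : Set M.E,
    M.Indep (Subtype.val '' I) ↔ N.Indep (Subtype.val '' (e '' I))

variable {M : Matroid α} {C I X : Set α}

lemma isCircuit'_iff_isCircuit : M.IsCircuit' C ↔ M.IsCircuit C := by
  rw [isCircuit_iff_forall_ssubset]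
  rfl

lemma IsBasis'.rk_eq_ncard (hI : M.IsBasis' I X) (hIfin : I.Finite) : M.rk X = I.ncard := by
  refine IsGreatest.csSup_eq ⟨⟨I, hI.indep, hI.subset, rfl⟩, ?_⟩
  rintro _ ⟨J, hJ, hJX, rfl⟩
  have hJfin : J.Finite := (hI.isRkFinite_of_finite hIfin).finite_of_indep_subset hJ hJX
  have hle : J.encard ≤ I.encard := hI.encard_eq_eRk ▸ hJ.encard_le_eRk_of_subset hJX
  rwa [← hJfin.cast_ncard_eq, ← hIfin.cast_ncard_eq, Nat.cast_le] at hle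

lemma IsRkFinite.cast_rk_eq_eRk (hX : M.IsRkFinite X) : (M.rk X : ℕ∞) = M.eRk X := by
  obtain ⟨I, hI, hIfin⟩ := hX.exists_finite_isBasis'
  rw [hI.rk_eq_ncard hIfin, hIfin.cast_ncard_eq, hI.encard_eq_eRk]

lemma cyclicFlat_closure (hX : ∀ e ∈ X, ∃ C, M.IsCircuit' C ∧ C ⊆ X ∧ e ∈ C) :
    M.CyclicFlat (M.closure X) := by
  refine ⟨isFlat_closure X, fun e he ↦ ?_⟩
  by_cases heX : e ∈ X
  · obtain ⟨C, hC, hCX, heC⟩ := hX e heX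
    exact ⟨C, hC, M.subset_closure_of_subset' hCX hC.1.subset_ground, heC⟩
  obtain ⟨I, hI⟩ := M.exists_isBasis' X
  have heI : e ∉ I := fun h ↦ heX (hI.subset h)
  rw [← hI.closure_eq_closure] at he ⊢
  refine ⟨M.fundCircuit e I, isCircuit'_iff_isCircuit.2 (hI.indep.fundCircuit_isCircuit he heI),
    (M.fundCircuit_subset_insert e I).trans (Set.insert_subset he ?_), M.mem_fundCircuit e I⟩
  exact M.subset_closure I hI.indep.subset_ground

lemma IsCircuit.cyclicFlat_closure (hC : M.IsCircuit C) : M.CyclicFlat (M.closure C) :=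
  Matroid.cyclicFlat_closure fun _ he ↦ ⟨C, isCircuit'_iff_isCircuit.2 hC, subset_rfl, he⟩

lemma indep_iff_forall_cyclicFlat_encard_le_eRk [M.Finitary] (hI : I ⊆ M.E) :
    M.Indep I ↔ ∀ X, M.CyclicFlat X → (I ∩ X).encard ≤ M.eRk X := by
  refine ⟨fun hIi X _ ↦ (hIi.subset Set.inter_subset_left).encard_le_eRk_of_subset
    Set.inter_subset_right, fun h ↦ ?_⟩
  by_contra hIi
  obtain ⟨C, hCI, hC⟩ := (M.not_indep_iff hI).1 hIi |>.exists_isCircuit_subset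
  have hCX : C ⊆ I ∩ M.closure C := Set.subset_inter hCI (M.subset_closure C hC.subset_ground)
  have hrk : M.eRk C < C.encard := by
    rw [← hC.eRk_add_one_eq]
    exact (ENat.lt_add_one_iff (M.isRkFinite_of_finite hC.finite).eRk_lt_top.ne).2 le_rfl
  have hle := h _ hC.cyclicFlat_closure
  rw [eRk_closure_eq] at hle
  exact (hle.trans_lt hrk).not_ge (Set.encard_le_encard hCX)

end Matroid

/-- A set `I ⊆ E(M)` is independent in a finite matroid `M` iff `|I ∩ X| ≤ r X` for every
cyclic flat `X` of `M`. -/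
theorem indep_iff_forall_cyclicFlat {α : Type*} (M : Matroid α) [M.Finite]
    (I : Set α) (hI : I ⊆ M.E) :
    M.Indep I ↔ ∀ X : Set α, M.CyclicFlat X → (I ∩ X).ncard ≤ M.rk X := by
  rw [Matroid.indep_iff_forall_cyclicFlat_encard_le_eRk hI]
  refine forall₂_congr fun X _ ↦ ?_
  have hIX : (I ∩ X).Finite := (M.ground_finite.subset hI).inter_of_left X
  rw [← (M.isRkFinite_set X).cast_rk_eq_eRk, ← hIX.cast_ncard_eq, Nat.cast_le]
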